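/- Let E be a connected, countable amplified directed graph and set V₀ := {H(v, 0) : v ∈ E⁰}. Then for each H ∈ ℋ_vert there is a unique n ∈ ℤ such that lt_n(H) ∈ V₀. -/

import Mathlib

/-- A directed graph: a set of vertices, a set of edges, and range and source maps. -/
structure DirGraph where
  V : Type
  E : Type
  r : E → V
  s : E → V

namespace DirGraph

variable (G : DirGraph)

/-- The skew-product graph `E ×₁ ℤ`. -/
def skew : DirGraph where
  V := G.V × ℤ
  E := G.E × ℤ
  r := fun e => (G.r e.1, e.2 + 1)
  s := fun e => (G.s e.1, e.2)

/-- `G.PathRel v w n` : there is a path of length `n` from `v` to `w`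
(vertices are paths of length `0`). -/
inductive PathRel : G.V → G.V → ℕ → Prop
  | nil (v : G.V) : PathRel v v 0
  | cons (e : G.E) {w : G.V} {n : ℕ} : PathRel (G.r e) w n → PathRel (G.s e) w (n + 1)

/-- A set of vertices is hereditary if it contains the range of every edge whose
source it contains. -/
def Hereditary (H : Set G.V) : Prop := ∀ e : G.E, G.s e ∈ H → G.r e ∈ H

/-- `H(v, n)`: the smallest hereditary subset of `(E ×₁ ℤ)⁰` containing `(v, n)`. -/
def Hgen (v : G.V) (n : ℤ) : Set (G.V × ℤ) :=
  ⋂₀ {K : Set (G.V × ℤ) | G.skew.Hereditary K ∧ (v, n) ∈ K}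

/-- The translation action `lt_k(H) = {(v, n + k) : (v, n) ∈ H}`. -/
def lt (k : ℤ) (H : Set (G.V × ℤ)) : Set (G.V × ℤ) :=
  (fun p : G.V × ℤ => (p.1, p.2 + k)) '' H

/-- The hereditary set `H₀ = {(v, n) : v ∈ E⁰, n ≥ 0}`. -/
def H0 : Set (G.V × ℤ) := {p | 0 ≤ p.2}

/-- A graph is amplified if for all vertices `v, w` the set `vE¹w` of edges from `v`
to `w` is empty or infinite. -/
def Amplified : Prop :=
  ∀ v w : G.V, {e : G.E | G.s e = v ∧ G.r e = w} = ∅ ∨ {e : G.E | G.s e = v ∧ G.r e = w}.Infinite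

/-- A graph is connected if the smallest equivalence relation on the vertices containing
`{(s e, r e) : e ∈ E¹}` is everything. -/
def Connected : Prop :=
  ∀ v w : G.V, Relation.EqvGen (fun a b => ∃ e : G.E, G.s e = a ∧ G.r e = b) v w

/-- `L` has a unique predecessor in the poset of hereditary subsets of `(E ×₁ ℤ)⁰`. -/
def UniquePred (L : Set (G.V × ℤ)) : Prop :=
  ∃ K : Set (G.V × ℤ), G.skew.Hereditary K ∧ K ⊂ L ∧
    ∀ K' : Set (G.V × ℤ), G.skew.Hereditary K' → K' ⊂ L → K' ⊆ K

/-- `ℋ_vert`: the hereditary subsets of `(E ×₁ ℤ)⁰` having a unique predecessor. -/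
def HVert : Set (Set (G.V × ℤ)) := {L | G.skew.Hereditary L ∧ G.UniquePred L}

/-- `V₀ = {H(v, 0) : v ∈ E⁰}`. -/
def V0 : Set (Set (G.V × ℤ)) := {L | ∃ v : G.V, L = G.Hgen v 0}


theorem lt_hereditary (k : ℤ) {H : Set (G.V × ℤ)}
    (hH : G.skew.Hereditary H) : G.skew.Hereditary (G.lt k H) := by
  rintro ⟨f, m⟩ hs
  obtain ⟨⟨v, n⟩, hvn, heq⟩ := hs
  have h1 : v = G.s f := congrArg Prod.fst heq
  have h2 : n + k = m := congrArg Prod.snd heq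
  subst h1
  refine ⟨(G.r f, n + 1), hH (f, n) hvn, ?_⟩
  show ((G.r f : G.V), n + 1 + k) = (G.r f, m + 1)
  rw [Prod.ext_iff]
  exact ⟨rfl, by omega⟩

theorem H0_hereditary : G.skew.Hereditary G.H0 := by
  rintro ⟨f, m⟩ hm
  have : 0 ≤ m := hm
  show 0 ≤ m + 1
  omega

/-- The hereditary subsets of the skew-product graph, as a type. -/
def HS := {L : Set (G.V × ℤ) // G.skew.Hereditary L}

/-- Translation on hereditary subsets of the skew product. -/
def ltH (k : ℤ) (A : G.HS) : G.HS := ⟨G.lt k A.1, G.lt_hereditary k A.2⟩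

/-- `H₀` as an element of `G.HS`. -/
def H0H : G.HS := ⟨G.H0, G.H0_hereditary⟩

/-- The vertex set `Ē⁰` of the graph recovered from `(ℋ(E ×₁ ℤ), ⊆, lt, H₀)`. -/
def Ebar0 : Set (Set (G.V × ℤ)) := {L | L ∈ G.HVert ∧ L ⊆ G.H0 ∧ ¬ L ⊆ G.lt 1 G.H0}

/-- The graph `Ē` recovered from `(ℋ(E ×₁ ℤ), ⊆, lt, H₀)`. -/
noncomputable def Ebar : DirGraph where
  V := G.Ebar0
  E := {t : Set (G.V × ℤ) × ℕ × Set (G.V × ℤ) //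
          t.1 ∈ G.Ebar0 ∧ t.2.2 ∈ G.Ebar0 ∧ G.lt 1 t.2.2 ⊆ t.1}
  s := fun t => ⟨t.1.1, t.2.1⟩
  r := fun t => ⟨t.1.2.2, t.2.2.1⟩

end DirGraph

open DirGraph

/-!
An element `L` of `ℋ_vert` is generated by a single vertex: otherwise every `H(p)` with `p ∈ L`
is a proper hereditary subset of `L`, hence lies below the unique predecessor `K`, and then
`L ⊆ K`. Translation moves generators, `lt_k(H(v, m)) = H(v, m + k)`, and the lowest level
occurring in `H(v, m)` is `m`, so `lt_k(H(v, m)) ∈ V₀` exactly when `k = -m`.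
-/

namespace DirGraph

variable (G : DirGraph)

theorem Hgen_hereditary (v : G.V) (n : ℤ) : G.skew.Hereditary (G.Hgen v n) :=
  fun e he K hK => hK.1 e (he K hK)

theorem mem_Hgen (v : G.V) (n : ℤ) : (v, n) ∈ G.Hgen v n :=
  fun _ hK => hK.2

theorem Hgen_subset {v : G.V} {n : ℤ} {H : Set (G.V × ℤ)}
    (hH : G.skew.Hereditary H) (hvn : (v, n) ∈ H) : G.Hgen v n ⊆ H :=
  fun _ hp => hp H ⟨hH, hvn⟩

theorem le_snd_of_mem_Hgen {v : G.V} {n : ℤ} {p : G.V × ℤ} (hp : p ∈ G.Hgen v n) :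
    n ≤ p.2 := by
  have hlevels : G.skew.Hereditary {q : G.V × ℤ | n ≤ q.2} := fun e he => by
    change n ≤ e.2 + 1
    change n ≤ e.2 at he
    omega
  exact G.Hgen_subset hlevels (le_refl n) hp

theorem snd_eq_of_Hgen_eq {v w : G.V} {m n : ℤ} (h : G.Hgen v m = G.Hgen w n) : m = n :=
  le_antisymm (G.le_snd_of_mem_Hgen (h ▸ G.mem_Hgen w n : (w, n) ∈ G.Hgen v m))
    (G.le_snd_of_mem_Hgen (h ▸ G.mem_Hgen v m : (v, m) ∈ G.Hgen w n))

theorem mem_lt {k : ℤ} {H : Set (G.V × ℤ)} {p : G.V × ℤ} :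
    p ∈ G.lt k H ↔ (p.1, p.2 - k) ∈ H := by
  constructor
  · rintro ⟨q, hq, rfl⟩
    simpa using hq
  · exact fun hp => ⟨_, hp, by simp⟩

theorem lt_subset_iff {k : ℤ} {H K : Set (G.V × ℤ)} : G.lt k H ⊆ K ↔ H ⊆ G.lt (-k) K := by
  simp only [Set.subset_def, mem_lt, Prod.forall, sub_neg_eq_add]
  constructor
  · exact fun h v n hvn => h v (n + k) (by simpa using hvn)
  · exact fun h v n hvn => by simpa using h v (n - k) hvn

theorem lt_Hgen (k : ℤ) (v : G.V) (n : ℤ) : G.lt k (G.Hgen v n) = G.Hgen v (n + k) := by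
  apply subset_antisymm
  · refine G.lt_subset_iff.2 (G.Hgen_subset (G.lt_hereditary _ (G.Hgen_hereditary v _)) ?_)
    simpa [mem_lt] using G.mem_Hgen v (n + k)
  · refine G.Hgen_subset (G.lt_hereditary _ (G.Hgen_hereditary v n)) ?_
    simpa [mem_lt] using G.mem_Hgen v n

theorem exists_eq_Hgen_of_uniquePred {L : Set (G.V × ℤ)} (hL : G.skew.Hereditary L)
    (hpred : G.UniquePred L) : ∃ v n, L = G.Hgen v n := by
  obtain ⟨K, -, hKL, hKmax⟩ := hpred
  by_contra! hprincipal
  have hHgen_le : ∀ p ∈ L, G.Hgen p.1 p.2 ⊆ K := fun p hp =>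
    hKmax _ (G.Hgen_hereditary p.1 p.2)
      ((G.Hgen_subset hL hp).ssubset_of_ne (hprincipal p.1 p.2).symm)
  exact hKL.not_subset fun p hp => hHgen_le p hp (G.mem_Hgen p.1 p.2)

end DirGraph

theorem hvert_unique_translate_general (G : DirGraph)
    (L : Set (G.V × ℤ)) (hL : L ∈ G.HVert) :
    ∃! n : ℤ, G.lt n L ∈ G.V0 := by
  obtain ⟨v, m, rfl⟩ := G.exists_eq_Hgen_of_uniquePred hL.1 hL.2
  refine ⟨-m, ⟨v, by rw [G.lt_Hgen, add_neg_cancel]⟩, ?_⟩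
  rintro n ⟨w, hw⟩
  rw [G.lt_Hgen] at hw
  have := G.snd_eq_of_Hgen_eq hw
  omega

theorem hvert_unique_translate (G : DirGraph) [Countable G.V] [Countable G.E]
    (hconn : G.Connected) (hG : G.Amplified)
    (L : Set (G.V × ℤ)) (hL : L ∈ G.HVert) :
    ∃! n : ℤ, G.lt n L ∈ G.V0 :=
  hvert_unique_translate_general G L hL
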